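/- arXiv:1110.6387 — 5 statements merged into one kernel-verified Lean document; each statement's English description precedes it below -/
import Mathlib

section
/- A hitting CNF formula F with n variables has exactly 2^n − Σ_{C∈F} 2^{n−|C|} satisfying total assignments over its n variables. In particular, F is satisfiable iff Σ_{C∈F} 2^{n−|C|} < 2^n. -/
/-- A clause is a finite set of literals; a literal is a variable paired with a polarity. -/
abbrev Clause (V : Type*) := Finset (V × Bool)

/-- A CNF formula is a finite set of clauses. -/
abbrev CNF (V : Type*) := Finset (Finset (V × Bool))

variable {V : Type*} [DecidableEq V]

/-- A (total) assignment satisfies a clause if some literal evaluates to true. -/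
def satClause (σ : V → Bool) (C : Clause V) : Prop := ∃ l ∈ C, σ l.1 = l.2

/-- An assignment satisfies a formula if it satisfies every clause. -/
def Satisfies (σ : V → Bool) (F : CNF V) : Prop := ∀ C ∈ F, satClause σ C

/-- A formula is satisfiable if some total assignment satisfies it. -/
def Satisfiable (F : CNF V) : Prop := ∃ σ : V → Bool, Satisfies σ F

/-- The variables of a clause. -/
def varsC (C : Clause V) : Finset V := C.image Prod.fst

/-- The variables of a formula. -/
def varsF (F : CNF V) : Finset V := F.sup varsC

/-- `F[τ]` where `τ` is regarded as a truth assignment on the set `B` of variables: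
remove all clauses satisfied by `τ` (i.e. containing a literal over `B` set to true),
and remove all literals over `B` from the remaining clauses. -/
def reduceF (F : CNF V) (B : Finset V) (τ : V → Bool) : CNF V :=
  (F.filter (fun C => ∀ l ∈ C, l.1 ∈ B → τ l.1 ≠ l.2)).image
    (fun C => C.filter (fun l => l.1 ∉ B))

/-- Two clauses clash if they contain a complementary pair of literals. -/
def Clash (C C' : Clause V) : Prop := ∃ l ∈ C, (l.1, !l.2) ∈ C'

/-- A hitting formula: any two distinct clauses clash. -/
def Hitting (F : CNF V) : Prop := ∀ C ∈ F, ∀ C' ∈ F, C ≠ C' → Clash C C'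

/-- Clauses contain no complementary pair of literals. -/
def GoodF (F : CNF V) : Prop := ∀ C ∈ F, ∀ x : V, ¬((x, true) ∈ C ∧ (x, false) ∈ C)

instance (σ : V → Bool) (F : CNF V) : Decidable (Satisfies σ F) :=
  inferInstanceAs (Decidable (∀ C ∈ F, ∃ l ∈ C, σ l.1 = l.2))

/-!
A clause `C` without complementary literals is falsified exactly by the assignments that agree
with one fixed assignment on its `|C|` variables, so by `2^(n - |C|)` of them. Two clashing
clauses are never falsified together, so in a hitting formula the unsatisfying assignments
split as a disjoint union over the clauses.
-/

open Finset

theorem card_filter_forall_mem_eq {α β : Type*} [Fintype α] [DecidableEq α] [Fintype β]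
    [DecidableEq β] (s : Finset α) (f : α → β) :
    #{σ : α → β | ∀ x ∈ s, σ x = f x} = Fintype.card β ^ (Fintype.card α - #s) := by
  let e : {σ : α → β // ∀ x ∈ s, σ x = f x} ≃ ({x : α // x ∉ s} → β) :=
    { toFun := fun σ x => σ.1 x.1
      invFun := fun g => ⟨fun x => if h : x ∈ s then f x else g ⟨x, h⟩, fun x hx => by simp [hx]⟩
      left_inv := by
        rintro ⟨σ, hσ⟩
        ext x
        by_cases h : x ∈ s <;> simp [h, hσ x]
      right_inv := fun g => by ext x; simp [x.2] }
  rw [← Fintype.card_subtype, Fintype.card_congr e, Fintype.card_fun, Fintype.card_subtype_compl,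
    Fintype.card_coe]

theorem card_varsC_of_not_complementary {C : Clause V}
    (hC : ∀ x : V, ¬((x, true) ∈ C ∧ (x, false) ∈ C)) : #(varsC C) = #C := by
  refine card_image_of_injOn ?_
  rintro ⟨x, b⟩ h ⟨y, b'⟩ h' (rfl : x = y)
  cases b <;> cases b' <;> simp_all

section Falsifiers

variable [Fintype V]

def falsifiers (C : Clause V) : Finset (V → Bool) := {σ | ∀ l ∈ C, σ l.1 = !l.2}

theorem mem_falsifiers {C : Clause V} {σ : V → Bool} :
    σ ∈ falsifiers C ↔ ¬ satClause σ C := by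
  simp only [falsifiers, satClause, mem_filter, mem_univ, true_and, Bool.eq_not, not_exists,
    not_and, ne_eq]

theorem Clash.disjoint_falsifiers {C C' : Clause V} (h : Clash C C') :
    Disjoint (falsifiers C) (falsifiers C') := by
  obtain ⟨l, hl, hl'⟩ := h
  refine disjoint_left.mpr fun σ hσ hσ' => ?_
  have h₁ : σ l.1 = !l.2 := (mem_filter.mp hσ).2 l hl
  have h₂ : σ l.1 = l.2 := by simpa using (mem_filter.mp hσ').2 _ hl'
  exact Bool.not_ne_self l.2 (h₁.symm.trans h₂)

variable {C : Clause V} (hC : ∀ x : V, ¬((x, true) ∈ C ∧ (x, false) ∈ C))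
include hC

theorem falsifiers_eq_filter_forall_mem_varsC :
    falsifiers C = ({σ | ∀ x ∈ varsC C, σ x = decide ((x, false) ∈ C)} : Finset (V → Bool)) := by
  ext σ
  simp only [falsifiers, varsC, mem_filter, mem_univ, true_and, forall_mem_image]
  refine forall₂_congr fun ⟨x, b⟩ hl => ?_
  cases b <;> simp_all

theorem card_falsifiers : #(falsifiers C) = 2 ^ (Fintype.card V - #C) := by
  rw [falsifiers_eq_filter_forall_mem_varsC hC, card_filter_forall_mem_eq,
    card_varsC_of_not_complementary hC, Fintype.card_bool]

end Falsifiers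

theorem filter_not_satisfies_eq_biUnion [Fintype V] (F : CNF V) :
    ({σ | ¬ Satisfies σ F} : Finset (V → Bool)) = F.biUnion falsifiers := by
  ext σ
  simp [Satisfies, ← mem_falsifiers]

theorem card_filter_not_satisfies [Fintype V] {F : CNF V} (hGood : GoodF F) (hHit : Hitting F) :
    #{σ : V → Bool | ¬ Satisfies σ F} = ∑ C ∈ F, 2 ^ (Fintype.card V - #C) := by
  rw [filter_not_satisfies_eq_biUnion, card_biUnion
    fun C hC C' hC' hne => (hHit C hC C' hC' hne).disjoint_falsifiers]
  exact sum_congr rfl fun C hC => card_falsifiers (hGood C hC)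

theorem satisfiable_iff_card_filter_satisfies_pos [Fintype V] {F : CNF V} :
    Satisfiable F ↔ 0 < #{σ : V → Bool | Satisfies σ F} := by
  simp [card_pos, Finset.Nonempty, Satisfiable]

theorem stmt5_general [Fintype V] (F : CNF V) (hGood : GoodF F) (hHit : Hitting F) :
    (Finset.univ.filter (fun σ : V → Bool => Satisfies σ F)).card
        = 2 ^ Fintype.card V - ∑ C ∈ F, 2 ^ (Fintype.card V - C.card) ∧
    (Satisfiable F ↔ ∑ C ∈ F, 2 ^ (Fintype.card V - C.card) < 2 ^ Fintype.card V) := by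
  have hsplit := card_filter_add_card_filter_not (s := univ) (fun σ : V → Bool => Satisfies σ F)
  rw [card_filter_not_satisfies hGood hHit, card_univ, Fintype.card_fun, Fintype.card_bool]
    at hsplit
  rw [satisfiable_iff_card_filter_satisfies_pos]
  omega

/-- A hitting formula over `n` variables has exactly `2^n − Σ_{C∈F} 2^{n−|C|}` satisfying
total assignments; in particular it is satisfiable iff `Σ_{C∈F} 2^{n−|C|} < 2^n`. -/
theorem stmt5 [Fintype V] (F : CNF V) (hGood : GoodF F) (hHit : Hitting F)
    (hVar : varsF F = Finset.univ) :
    (Finset.univ.filter (fun σ : V → Bool => Satisfies σ F)).card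
        = 2 ^ Fintype.card V - ∑ C ∈ F, 2 ^ (Fintype.card V - C.card) ∧
    (Satisfiable F ↔ ∑ C ∈ F, 2 ^ (Fintype.card V - C.card) < 2 ^ Fintype.card V) :=
  stmt5_general F hGood hHit
end

section
/- A set B of variables is a strong Horn-backdoor set of a CNF formula F if and only if B is a vertex cover of the positive primal graph of F (the graph on var(F) where two distinct variables are adjacent iff they occur together positively in some clause of F). -/
variable {V : Type*} [DecidableEq V]

/-- Horn formulas: each clause contains at most one positive literal. -/
def IsHorn (F : CNF V) : Prop := ∀ C ∈ F, (C.filter (fun l => l.2 = true)).card ≤ 1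

lemma exists_forall_ne_of_not_complementary {C : Clause V}
    (hC : ∀ x : V, ¬((x, true) ∈ C ∧ (x, false) ∈ C)) :
    ∃ τ : V → Bool, ∀ l ∈ C, τ l.1 ≠ l.2 := by
  classical
  refine ⟨fun v => !decide ((v, true) ∈ C), ?_⟩
  rintro ⟨v, (_ | _)⟩ hl
  · simpa using fun hv => hC v ⟨hv, hl⟩
  · simpa using hl

lemma filter_mem_reduceF {F : CNF V} {C : Clause V} (hCF : C ∈ F) {B : Finset V}
    {τ : V → Bool} (hτ : ∀ l ∈ C, τ l.1 ≠ l.2) :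
    C.filter (fun l => l.1 ∉ B) ∈ reduceF F B τ :=
  Finset.mem_image_of_mem _ (Finset.mem_filter.mpr ⟨hCF, fun l hl _ => hτ l hl⟩)

/-- The clauses of every `F[τ]` are the clauses of `F` with `B` deleted, and, without
complementary pairs, each clause of `F` survives under the assignment falsifying it. -/
lemma forall_isHorn_reduceF_iff {F : CNF V} (hGood : GoodF F) (B : Finset V) :
    (∀ τ : V → Bool, IsHorn (reduceF F B τ)) ↔
      ∀ C ∈ F, ((C.filter (fun l => l.1 ∉ B)).filter (fun l => l.2 = true)).card ≤ 1 := by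
  constructor
  · intro h C hCF
    obtain ⟨τ, hτ⟩ := exists_forall_ne_of_not_complementary (hGood C hCF)
    exact h τ _ (filter_mem_reduceF hCF hτ)
  · intro h τ D hD
    obtain ⟨C, hC, rfl⟩ := Finset.mem_image.mp hD
    exact h C (Finset.mem_filter.mp hC).1

lemma card_filter_positive_outside_le_one_iff (C : Clause V) (B : Finset V) :
    ((C.filter (fun l => l.1 ∉ B)).filter (fun l => l.2 = true)).card ≤ 1 ↔
      ∀ x y : V, x ≠ y → (x, true) ∈ C → (y, true) ∈ C → x ∈ B ∨ y ∈ B := by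
  simp only [Finset.card_le_one, Finset.mem_filter, and_imp, Prod.forall]
  constructor
  · intro h x y hxy hx hy
    by_contra! hxyB
    exact hxy (Prod.ext_iff.mp (h x true hx hxyB.1 rfl y true hy hxyB.2 rfl)).1
  · rintro h x _ hx hxB rfl y _ hy hyB rfl
    by_contra hne
    rcases h x y (fun hxy => hne (hxy ▸ rfl)) hx hy with hB | hB
    exacts [hxB hB, hyB hB]

/-- `B` is a strong Horn-backdoor set of `F` iff `B` is a vertex cover of the positive
primal graph of `F` (two distinct variables adjacent iff they occur together positively
in some clause). -/
theorem stmt6 (F : CNF V) (hGood : GoodF F) (B : Finset V) :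
    (∀ τ : V → Bool, IsHorn (reduceF F B τ)) ↔
      (∀ x y : V, x ≠ y → (∃ C ∈ F, (x, true) ∈ C ∧ (y, true) ∈ C) → x ∈ B ∨ y ∈ B) := by
  simp only [forall_isHorn_reduceF_iff hGood, card_filter_positive_outside_le_one_iff]
  constructor
  · rintro h x y hxy ⟨C, hCF, hx, hy⟩
    exact h C hCF x y hxy hx hy
  · intro h C hCF x y hxy hx hy
    exact h x y hxy ⟨C, hCF, hx, hy⟩
end

section
/- Let F be a CNF formula and let G be the graph whose vertices are all literals x^0, x^1 for x ∈ var(F), with edges {x^0, x^1} for each variable x (forming a perfect matching M), and edges {x^ε, y^δ} for each pair of distinct literals occurring together in some clause of F. Then F has a deletion RHorn-backdoor set of size at most k if and only if G has a vertex cover of size at most |M| + k. -/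
variable {V : Type*} [DecidableEq V]

/-- The renaming `r_X(F)`: flip the polarity of all occurrences of variables in `X`. -/
def renameF (F : CNF V) (X : Finset V) : CNF V :=
  F.image (fun C => C.image (fun l => if l.1 ∈ X then (l.1, !l.2) else l))

/-- Renamable Horn formulas. -/
def IsRHorn (F : CNF V) : Prop := ∃ X : Finset V, IsHorn (renameF F X)

/-- `F − B`: delete all literals over variables in `B` from all clauses. -/
def deleteF (F : CNF V) (B : Finset V) : CNF V :=
  F.image (fun C => C.filter (fun l => l.1 ∉ B))

lemma mem_varsF {F : CNF V} {C : Clause V} {l : V × Bool} (hC : C ∈ F) (hl : l ∈ C) :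
    l.1 ∈ varsF F :=
  Finset.le_sup (f := varsC) hC (Finset.mem_image_of_mem Prod.fst hl)

def renameLit (X : Finset V) (l : V × Bool) : V × Bool :=
  if l.1 ∈ X then (l.1, !l.2) else l

section renameLit

variable (X : Finset V) (l : V × Bool)

@[simp]
lemma renameLit_fst : (renameLit X l).1 = l.1 := by
  unfold renameLit; split_ifs <;> rfl

lemma renameLit_snd : (renameLit X l).2 = (l.2 ^^ decide (l.1 ∈ X)) := by
  unfold renameLit; split_ifs with h <;> simp [h]

lemma renameLit_involutive : Function.Involutive (renameLit X) := fun l =>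
  Prod.ext (by simp) (by simp [renameLit_snd])

lemma renameLit_injective : Function.Injective (renameLit X) :=
  (renameLit_involutive X).injective

lemma mem_image_renameLit_iff {s : Finset (V × Bool)} :
    l ∈ s.image (renameLit X) ↔ renameLit X l ∈ s := by
  rw [← Finset.mem_coe, Finset.coe_image, (renameLit_involutive X).image_eq_preimage_symm]
  rfl

end renameLit

lemma renameF_eq (F : CNF V) (X : Finset V) :
    renameF F X = F.image (fun C => C.image (renameLit X)) := rfl

lemma isHorn_renameF_deleteF_iff (F : CNF V) (B X : Finset V) :
    IsHorn (renameF (deleteF F B) X) ↔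
      ∀ C ∈ F, ∀ l ∈ C, l.1 ∉ B → (renameLit X l).2 = true →
        ∀ l' ∈ C, l'.1 ∉ B → (renameLit X l').2 = true → l = l' := by
  simp only [IsHorn, renameF_eq, deleteF, Finset.forall_mem_image,
    Finset.card_le_one, Finset.mem_filter, (renameLit_injective X).eq_iff, and_imp]

def renamingCover (S B X : Finset V) : Finset (V × Bool) :=
  (S ×ˢ {false} ∪ B ×ˢ {true}).image (renameLit X)

section renamingCover

variable {S B X : Finset V}

lemma mem_renamingCover {l : V × Bool} :
    l ∈ renamingCover S B X ↔
      l.1 ∈ S ∧ (renameLit X l).2 = false ∨ l.1 ∈ B ∧ (renameLit X l).2 = true := by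
  simp only [renamingCover, mem_image_renameLit_iff, Finset.mem_union, Finset.mem_product,
    Finset.mem_singleton, renameLit_fst]

lemma card_renamingCover : (renamingCover S B X).card = S.card + B.card := by
  rw [renamingCover, Finset.card_image_of_injective _ (renameLit_injective X),
    Finset.card_union_of_disjoint, Finset.card_product, Finset.card_product]
  · simp
  · simp [Finset.disjoint_left]

end renamingCover

def IsLiteralGraphCover (F : CNF V) (K : Finset (V × Bool)) : Prop :=
  (∀ x ∈ varsF F, (x, false) ∈ K ∨ (x, true) ∈ K) ∧
    ∀ C ∈ F, ∀ l ∈ C, ∀ l' ∈ C, l ≠ l' → l ∈ K ∨ l' ∈ K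

lemma isLiteralGraphCover_renamingCover {F : CNF V} {B X : Finset V}
    (hHorn : IsHorn (renameF (deleteF F B) X)) :
    IsLiteralGraphCover F (renamingCover (varsF F) B X) := by
  refine ⟨fun x hx => ?_, fun C hC l hl l' hl' hne => ?_⟩
  · cases h : decide (x ∈ X) <;> simp_all [mem_renamingCover, renameLit_snd]
  · by_contra! h
    simp only [mem_renamingCover, mem_varsF hC hl, mem_varsF hC hl', true_and, not_or,
      not_and, Bool.not_eq_false] at h
    exact hne ((isHorn_renameF_deleteF_iff F B X).1 hHorn C hC l hl (fun hB => h.1.2 hB h.1.1)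
      h.1.1 l' hl' (fun hB => h.2.2 hB h.2.1) h.2.1)

section Cover

variable (S : Finset V) (K : Finset (V × Bool))

def coveredTwice : Finset V := S.filter fun x => (x, false) ∈ K ∧ (x, true) ∈ K

def coveredPositively : Finset V := S.filter fun x => (x, true) ∈ K

variable {S K}

lemma renamingCover_subset (hmatch : ∀ x ∈ S, (x, false) ∈ K ∨ (x, true) ∈ K) :
    renamingCover S (coveredTwice S K) (coveredPositively S K) ⊆ K := by
  rintro ⟨x, b⟩ hl
  rw [mem_renamingCover] at hl
  rcases hl with ⟨hx, hneg⟩ | ⟨hx, -⟩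
  · rcases hmatch x hx with h | h <;> cases b <;> simp_all [renameLit_snd, coveredPositively]
  · cases b <;> simp_all [coveredTwice]

lemma notMem_of_renameLit_snd_eq_true {l : V × Bool} (hS : l.1 ∈ S) (hB : l.1 ∉ coveredTwice S K)
    (hpos : (renameLit (coveredPositively S K) l).2 = true) : l ∉ K := by
  obtain ⟨x, b⟩ := l
  cases b <;> simp_all [renameLit_snd, coveredPositively, coveredTwice]

end Cover

lemma isHorn_of_isLiteralGraphCover {F : CNF V} {K : Finset (V × Bool)}
    (hK : IsLiteralGraphCover F K) :
    IsHorn (renameF (deleteF F (coveredTwice (varsF F) K)) (coveredPositively (varsF F) K)) := by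
  rw [isHorn_renameF_deleteF_iff]
  intro C hC l hl hlB hlpos l' hl' hl'B hl'pos
  by_contra hne
  rcases hK.2 C hC l hl l' hl' hne with h | h
  · exact notMem_of_renameLit_snd_eq_true (mem_varsF hC hl) hlB hlpos h
  · exact notMem_of_renameLit_snd_eq_true (mem_varsF hC hl') hl'B hl'pos h

/-- `F` has a deletion RHorn-backdoor set of size at most `k` iff the literal graph of `F`
(with the matching edges `{x⁰, x¹}` for `x ∈ var(F)` and an edge between any two distinct
literals occurring together in a clause) has a vertex cover of size at most `|var(F)| + k`. -/
theorem stmt11 (F : CNF V) (k : ℕ) :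
    (∃ B : Finset V, B.card ≤ k ∧ IsRHorn (deleteF F B)) ↔
      (∃ K : Finset (V × Bool), K.card ≤ (varsF F).card + k ∧
        (∀ x ∈ varsF F, (x, false) ∈ K ∨ (x, true) ∈ K) ∧
        (∀ C ∈ F, ∀ l ∈ C, ∀ l' ∈ C, l ≠ l' → l ∈ K ∨ l' ∈ K)) := by
  constructor
  · rintro ⟨B, hBk, X, hHorn⟩
    refine ⟨renamingCover (varsF F) B X, by rw [card_renamingCover]; omega,
      isLiteralGraphCover_renamingCover hHorn⟩
  · rintro ⟨K, hKcard, hK⟩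
    refine ⟨coveredTwice (varsF F) K, ?_, _, isHorn_of_isLiteralGraphCover hK⟩
    have := Finset.card_le_card (renamingCover_subset hK.1)
    rw [card_renamingCover] at this
    omega
end

section
/- Let G = (V, E) be a graph containing a perfect matching M ⊆ E. Construct a 2CNF formula F2 with a variable v for each vertex v ∈ V, a negative clause {¬a, ¬b} for each matching edge {a,b} ∈ M, and a positive clause {a, b} for each edge {a,b} ∈ E \ M. Then G has a vertex cover of size at most |M| + k if and only if one can delete at most k of the negative clauses from F2 to obtain a satisfiable formula. -/
variable {V : Type*} [DecidableEq V]

/-- The negative clauses `{¬a, ¬b}` for the perfect-matching edges `{v, f v}`. -/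
def negClauses [Fintype V] (f : V → V) : CNF V :=
  Finset.univ.image (fun v : V => ({(v, false), (f v, false)} : Clause V))

/-- The positive clauses `{a, b}` for the non-matching edges. -/
def posClauses [Fintype V] (G : SimpleGraph V) [DecidableRel G.Adj] (f : V → V) : CNF V :=
  ((Finset.univ ×ˢ Finset.univ).filter
      (fun p : V × V => G.Adj p.1 p.2 ∧ p.2 ≠ f p.1)).image
    (fun p => ({(p.1, true), (p.2, true)} : Clause V))

/-- The number of matching edges `{v, f v}`. -/
def matchCard [Fintype V] (f : V → V) : ℕ :=
  (Finset.univ.image (fun v : V => ({v, f v} : Finset V))).card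

/-!
The matching edges `{v, f v}` partition `V`, so `#K = ∑ e, #(K ∩ e)`. A vertex cover `K` meets
every matching edge, hence `#K ≥ #M + #{e ∈ M | e ⊆ K}`; making exactly the vertices of `K` true
violates precisely the negative clauses of the matching edges inside `K`, and these are deleted.
Conversely, the true vertices `T` of a satisfying assignment cover every non-matching edge, and
each matching edge inside `T` has its negative clause deleted; adding one endpoint of every
matching edge that misses `T` gives a cover of size at most `#M + #D`.
-/

open Finset

section Counting

lemma one_add_ite_subset_le_card_inter {K e : Finset V} (he : #e = 2)
    (hKe : (K ∩ e).Nonempty) : 1 + (if e ⊆ K then 1 else 0) ≤ #(K ∩ e) := by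
  have hpos := hKe.card_pos
  split_ifs with hsub
  · rw [inter_eq_right.2 hsub, he]
  · omega

lemma card_inter_add_ite_disjoint_le {T e : Finset V} (he : #e = 2) :
    #(T ∩ e) + (if Disjoint T e then 1 else 0) ≤ 1 + (if e ⊆ T then 1 else 0) := by
  by_cases hsub : e ⊆ T
  · have hne : ¬ Disjoint T e := fun h =>
      (card_pos.1 (by omega : 0 < #e)).ne_empty
        (disjoint_self_iff_empty e |>.1 (disjoint_of_subset_left hsub h))
    simp only [hsub, hne, if_true, if_false]
    have := card_le_card (inter_subset_right (s₁ := T) (s₂ := e))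
    omega
  · have hlt : #(T ∩ e) < #e :=
      card_lt_card ⟨inter_subset_right, fun h => hsub (h.trans inter_subset_left)⟩
    split_ifs with hdisj
    · rw [disjoint_iff_inter_eq_empty.1 hdisj, card_empty]
    · omega

lemma inter_pair_nonempty_iff {K : Finset V} {a b : V} :
    (K ∩ {a, b}).Nonempty ↔ a ∈ K ∨ b ∈ K := by
  simp [Finset.Nonempty, and_or_left, exists_or]

lemma exists_hitting_set_card_le (S : Finset (Finset V)) (hS : ∀ e ∈ S, e.Nonempty) :
    ∃ H : Finset V, #H ≤ #S ∧ ∀ e ∈ S, (H ∩ e).Nonempty := by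
  choose g hg using hS
  refine ⟨S.attach.image fun e => g e.1 e.2, card_image_le.trans_eq S.card_attach, ?_⟩
  intro e he
  exact ⟨g e he, mem_inter.2 ⟨mem_image.2 ⟨⟨e, he⟩, mem_attach _ _, rfl⟩, hg e he⟩⟩

end Counting

section Matching

variable {f : V → V}

lemma pair_eq_pair_iff (hinv : Function.Involutive f) {v w : V} :
    ({v, f v} : Finset V) = {w, f w} ↔ v ∈ ({w, f w} : Finset V) := by
  refine ⟨fun h => h ▸ mem_insert_self v _, fun h => ?_⟩
  rcases mem_insert.1 h with rfl | h
  · rfl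
  · rw [mem_singleton.1 h, hinv w, pair_comm]

variable [Fintype V]

def matchingEdges (f : V → V) : Finset (Finset V) :=
  univ.image fun v => ({v, f v} : Finset V)

lemma matchCard_eq_card_matchingEdges (f : V → V) : matchCard f = #(matchingEdges f) := rfl

lemma pair_mem_matchingEdges (v : V) : ({v, f v} : Finset V) ∈ matchingEdges f :=
  mem_image_of_mem _ (mem_univ v)

lemma card_of_mem_matchingEdges (hfp : ∀ v, f v ≠ v) {e : Finset V}
    (he : e ∈ matchingEdges f) : #e = 2 := by
  obtain ⟨v, -, rfl⟩ := mem_image.1 he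
  exact card_pair (hfp v).symm

lemma card_eq_sum_card_inter_matchingEdges (hinv : Function.Involutive f) (K : Finset V) :
    #K = ∑ e ∈ matchingEdges f, #(K ∩ e) := by
  rw [card_eq_sum_card_fiberwise fun v _ => pair_mem_matchingEdges v]
  refine sum_congr rfl fun e he => congrArg card ?_
  obtain ⟨w, -, rfl⟩ := mem_image.1 he
  ext v
  simp only [mem_filter, mem_inter, pair_eq_pair_iff hinv]

lemma card_matchingEdges_add_card_filter_subset_le (hinv : Function.Involutive f)
    (hfp : ∀ v, f v ≠ v) {K : Finset V} (hK : ∀ e ∈ matchingEdges f, (K ∩ e).Nonempty) :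
    #(matchingEdges f) + #{e ∈ matchingEdges f | e ⊆ K} ≤ #K := by
  rw [card_eq_sum_card_inter_matchingEdges hinv K, card_filter, card_eq_sum_ones,
    ← sum_add_distrib]
  exact sum_le_sum fun e he =>
    one_add_ite_subset_le_card_inter (card_of_mem_matchingEdges hfp he) (hK e he)

lemma card_add_card_filter_disjoint_le (hinv : Function.Involutive f) (hfp : ∀ v, f v ≠ v)
    (T : Finset V) :
    #T + #{e ∈ matchingEdges f | Disjoint T e} ≤
      #(matchingEdges f) + #{e ∈ matchingEdges f | e ⊆ T} := by
  rw [card_eq_sum_card_inter_matchingEdges hinv T, card_filter, card_filter, card_eq_sum_ones,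
    ← sum_add_distrib, ← sum_add_distrib]
  exact sum_le_sum fun e he => card_inter_add_ite_disjoint_le (card_of_mem_matchingEdges hfp he)

end Matching

section Clauses

def negClause (e : Finset V) : Clause V := e.image fun v => (v, false)

lemma negClause_injective : Function.Injective (negClause (V := V)) :=
  image_injective fun _ _ h => congrArg Prod.fst h

lemma satClause_negClause_iff {σ : V → Bool} {e : Finset V} :
    satClause σ (negClause e) ↔ ∃ v ∈ e, σ v = false := by
  simp [satClause, negClause]

lemma satClause_pair_iff {σ : V → Bool} {l₁ l₂ : V × Bool} :
    satClause σ {l₁, l₂} ↔ σ l₁.1 = l₁.2 ∨ σ l₂.1 = l₂.2 := by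
  simp [satClause]

variable [Fintype V]

lemma negClauses_eq_image (f : V → V) : negClauses f = (matchingEdges f).image negClause := by
  simp [negClauses, matchingEdges, image_image, Function.comp_def, negClause, image_insert]

lemma mem_posClauses_iff {G : SimpleGraph V} [DecidableRel G.Adj] {f : V → V} {C : Clause V} :
    C ∈ posClauses G f ↔ ∃ a b, G.Adj a b ∧ b ≠ f a ∧ C = {(a, true), (b, true)} := by
  simp [posClauses, eq_comm, and_assoc]

lemma disjoint_posClauses_negClauses (G : SimpleGraph V) [DecidableRel G.Adj] (f : V → V) :
    Disjoint (posClauses G f) (negClauses f) := by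
  rw [disjoint_left]
  intro C hpos hneg
  obtain ⟨a, _, -, -, rfl⟩ := mem_posClauses_iff.1 hpos
  rw [negClauses_eq_image] at hneg
  obtain ⟨e, -, he⟩ := mem_image.1 hneg
  obtain ⟨v, -, hv⟩ := mem_image.1 (he ▸ mem_insert_self (a, true) _ : (a, true) ∈ negClause e)
  exact Bool.false_ne_true (congrArg Prod.snd hv)

end Clauses

section Reduction

variable [Fintype V] (G : SimpleGraph V) [DecidableRel G.Adj] {f : V → V}

lemma exists_deletion_satisfiable_of_cover (hinv : Function.Involutive f)
    (hadj : ∀ v, G.Adj v (f v)) {K : Finset V} (hcov : ∀ a b, G.Adj a b → a ∈ K ∨ b ∈ K) :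
    ∃ D ⊆ negClauses f, #D + matchCard f ≤ #K ∧
      Satisfiable ((negClauses f ∪ posClauses G f) \ D) := by
  set D := {e ∈ matchingEdges f | e ⊆ K}.image negClause
  have hDsub : D ⊆ negClauses f := by
    rw [negClauses_eq_image]
    exact image_subset_image (filter_subset _ _)
  have hmeet : ∀ e ∈ matchingEdges f, (K ∩ e).Nonempty := by
    intro e he
    obtain ⟨v, -, rfl⟩ := mem_image.1 he
    exact inter_pair_nonempty_iff.2 (hcov v (f v) (hadj v))
  refine ⟨D, hDsub, ?_, fun v => decide (v ∈ K), ?_⟩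
  · have := card_matchingEdges_add_card_filter_subset_le hinv
      (fun v => (hadj v).ne.symm) hmeet
    have : #D ≤ #{e ∈ matchingEdges f | e ⊆ K} := card_image_le
    rw [matchCard_eq_card_matchingEdges]
    omega
  · intro C hC
    obtain ⟨hC, hCD⟩ := mem_sdiff.1 hC
    rcases mem_union.1 hC with hneg | hpos
    · rw [negClauses_eq_image] at hneg
      obtain ⟨e, he, rfl⟩ := mem_image.1 hneg
      have hnsub : ¬ e ⊆ K := fun hsub => hCD (mem_image_of_mem _ (mem_filter.2 ⟨he, hsub⟩))
      obtain ⟨v, hve, hvK⟩ := not_subset.1 hnsub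
      exact satClause_negClause_iff.2 ⟨v, hve, by simpa using hvK⟩
    · obtain ⟨a, b, hab, -, rfl⟩ := mem_posClauses_iff.1 hpos
      simpa [satClause_pair_iff] using hcov a b hab

lemma exists_cover_of_deletion_satisfiable (hinv : Function.Involutive f)
    (hadj : ∀ v, G.Adj v (f v)) {D : CNF V} (hD : D ⊆ negClauses f)
    (hsat : Satisfiable ((negClauses f ∪ posClauses G f) \ D)) :
    ∃ K : Finset V, (∀ a b, G.Adj a b → a ∈ K ∨ b ∈ K) ∧ #K ≤ matchCard f + #D := by
  obtain ⟨σ, hσ⟩ := hsat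
  have hfp : ∀ v, f v ≠ v := fun v => (hadj v).ne.symm
  set T : Finset V := {v | σ v = true}
  obtain ⟨H, hHcard, hH⟩ := exists_hitting_set_card_le {e ∈ matchingEdges f | Disjoint T e}
    fun e he => card_pos.1 (by rw [card_of_mem_matchingEdges hfp (mem_filter.1 he).1]; omega)
  have hdouble : #{e ∈ matchingEdges f | e ⊆ T} ≤ #D := by
    refine card_le_card_of_injOn negClause (fun e he => ?_) negClause_injective.injOn
    obtain ⟨he, heT⟩ := mem_filter.1 (mem_coe.1 he)
    by_contra hnD
    have hCsat := hσ _ (mem_sdiff.2 ⟨mem_union_left _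
      (negClauses_eq_image f ▸ mem_image_of_mem _ he), hnD⟩)
    obtain ⟨v, hve, hv⟩ := satClause_negClause_iff.1 hCsat
    simpa [T, hv] using heT hve
  refine ⟨T ∪ H, fun a b hab => ?_, ?_⟩
  · by_cases hb : b = f a
    · rw [hb, ← inter_pair_nonempty_iff]
      by_cases hT : Disjoint T {a, f a}
      · exact (hH _ (mem_filter.2 ⟨pair_mem_matchingEdges a, hT⟩)).mono
          (inter_subset_inter_right subset_union_right)
      · exact (not_disjoint_iff_nonempty_inter.1 hT).mono
          (inter_subset_inter_right subset_union_left)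
    · have hpos : ({(a, true), (b, true)} : Clause V) ∈ posClauses G f :=
        mem_posClauses_iff.2 ⟨a, b, hab, hb, rfl⟩
      have hnD : ({(a, true), (b, true)} : Clause V) ∉ D := fun h =>
        disjoint_left.1 (disjoint_posClauses_negClauses G f) hpos (hD h)
      have := satClause_pair_iff.1 (hσ _ (mem_sdiff.2 ⟨mem_union_right _ hpos, hnD⟩))
      simp only [T, mem_union, mem_filter, mem_univ, true_and]
      tauto
  · have := card_add_card_filter_disjoint_le hinv hfp T
    have := card_union_le T H
    rw [matchCard_eq_card_matchingEdges]
    omega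

end Reduction

theorem stmt12_general [Fintype V] (G : SimpleGraph V) [DecidableRel G.Adj] (f : V → V)
    (hinv : Function.Involutive f) (hadj : ∀ v, G.Adj v (f v))
    (k : ℕ) :
    (∃ K : Finset V, (∀ a b : V, G.Adj a b → a ∈ K ∨ b ∈ K) ∧
        K.card ≤ matchCard f + k) ↔
      (∃ D ⊆ negClauses f, D.card ≤ k ∧
        Satisfiable ((negClauses f ∪ posClauses G f) \ D)) := by
  constructor
  · rintro ⟨K, hcov, hK⟩
    obtain ⟨D, hD, hDK, hsat⟩ := exists_deletion_satisfiable_of_cover G hinv hadj hcov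
    exact ⟨D, hD, by omega, hsat⟩
  · rintro ⟨D, hD, hDk, hsat⟩
    obtain ⟨K, hcov, hKD⟩ := exists_cover_of_deletion_satisfiable G hinv hadj hD hsat
    exact ⟨K, hcov, by omega⟩

/-- For a graph `G` with a perfect matching `M` (given by the fixed-point-free adjacency
involution `f`), `G` has a vertex cover of size at most `|M| + k` iff one can delete at
most `k` of the negative clauses from the 2CNF formula `F2` (negative clauses for the
matching edges, positive clauses for all other edges) to obtain a satisfiable formula. -/
theorem stmt12 [Fintype V] (G : SimpleGraph V) [DecidableRel G.Adj] (f : V → V)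
    (hinv : Function.Involutive f) (hfp : ∀ v, f v ≠ v) (hadj : ∀ v, G.Adj v (f v))
    (k : ℕ) :
    (∃ K : Finset V, (∀ a b : V, G.Adj a b → a ∈ K ∨ b ∈ K) ∧
        K.card ≤ matchCard f + k) ↔
      (∃ D ⊆ negClauses f, D.card ≤ k ∧
        Satisfiable ((negClauses f ∪ posClauses G f) \ D)) :=
  stmt12_general G f hinv hadj k
end

section
/- Under the construction of the previous statement, if H contains a k-clique {v1, …, vk} with vi ∈ Vi, then B = {v1, …, vk} is a weak C-backdoor set of F of size k for every class C containing all anti-monotone 2CNF formulas: setting all variables of B to true yields a formula F[τ] that is an anti-monotone 2CNF formula (hence in C) and is satisfiable (it is 0-valid). -/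
variable {V : Type*} [DecidableEq V]

/-- The CNF formula associated with a `k`-partite graph: a clause `{¬u, ¬v}` for every
pair of distinct non-adjacent vertices and, for each part `i`, the clause consisting of
all variables of part `i`, positively. -/
def partiteCNF [Fintype V] (k : ℕ) (part : V → Fin k)
    (H : SimpleGraph V) [DecidableRel H.Adj] : CNF V :=
  (((Finset.univ ×ˢ Finset.univ).filter
        (fun p : V × V => p.1 ≠ p.2 ∧ ¬H.Adj p.1 p.2)).image
      (fun p => ({(p.1, false), (p.2, false)} : Clause V))) ∪
    (Finset.univ.image (fun i : Fin k =>
      (Finset.univ.filter (fun v : V => part v = i)).image (fun v => (v, true))))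

/-- A formula is an anti-monotone 2CNF formula if every clause has at most two
literals, all of them negative. -/
def IsAntiMonotone2CNF (F : CNF V) : Prop :=
  ∀ C ∈ F, C.card ≤ 2 ∧ ∀ l ∈ C, l.2 = false

def IsZeroValid (F : CNF V) : Prop :=
  ∀ C ∈ F, ∃ l ∈ C, l.2 = false

omit [DecidableEq V] in
theorem IsZeroValid.satisfiable {F : CNF V} (hF : IsZeroValid F) : Satisfiable F :=
  ⟨fun _ => false, fun C hC => (hF C hC).imp fun _ ⟨hl, hneg⟩ => ⟨hl, hneg.symm⟩⟩

theorem forall_mem_reduceF {F : CNF V} {B : Finset V} {τ : V → Bool} {P : Clause V → Prop} :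
    (∀ D ∈ reduceF F B τ, P D) ↔
      ∀ C ∈ F, (∀ l ∈ C, l.1 ∈ B → τ l.1 ≠ l.2) → P (C.filter fun l => l.1 ∉ B) := by
  simp only [reduceF, Finset.forall_mem_image, Finset.mem_filter, and_imp]

section partiteCNF

variable [Fintype V] {k : ℕ} {part : V → Fin k} {H : SimpleGraph V} [DecidableRel H.Adj]
  {B : Finset V}

/-- Once `B` meets every part, setting `B` to true satisfies all the positive part clauses,
so only the negative pair clauses survive. -/
theorem exists_negPair_of_mem_partiteCNF (hcover : ∀ i, ∃ b ∈ B, part b = i)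
    {C : Clause V} (hC : C ∈ partiteCNF k part H)
    (hunsat : ∀ l ∈ C, l.1 ∈ B → true ≠ l.2) :
    ∃ u v, u ≠ v ∧ ¬H.Adj u v ∧ C = {(u, false), (v, false)} := by
  simp only [partiteCNF, Finset.mem_union, Finset.mem_image, Finset.mem_filter,
    Finset.mem_product, Finset.mem_univ, true_and] at hC
  rcases hC with ⟨p, ⟨hne, hnadj⟩, rfl⟩ | ⟨i, rfl⟩
  · exact ⟨p.1, p.2, hne, hnadj, rfl⟩
  · obtain ⟨b, hb, rfl⟩ := hcover i
    exact absurd rfl (hunsat (b, true) (by simp) hb)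

theorem isAntiMonotone2CNF_reduceF_partiteCNF (hcover : ∀ i, ∃ b ∈ B, part b = i) :
    IsAntiMonotone2CNF (reduceF (partiteCNF k part H) B fun _ => true) := by
  refine forall_mem_reduceF.2 fun C hC hunsat => ?_
  obtain ⟨u, v, -, -, rfl⟩ := exists_negPair_of_mem_partiteCNF hcover hC hunsat
  refine ⟨(Finset.card_filter_le _ _).trans Finset.card_le_two, fun l hl => ?_⟩
  simp only [Finset.mem_filter, Finset.mem_insert, Finset.mem_singleton] at hl
  rcases hl.1 with rfl | rfl <;> rfl

/-- A clique contains at most one endpoint of a non-edge, so the other endpoint's negative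
literal survives the reduction. -/
theorem isZeroValid_reduceF_partiteCNF (hcover : ∀ i, ∃ b ∈ B, part b = i)
    (hclique : H.IsClique (B : Set V)) :
    IsZeroValid (reduceF (partiteCNF k part H) B fun _ => true) := by
  refine forall_mem_reduceF.2 fun C hC hunsat => ?_
  obtain ⟨u, v, hne, hnadj, rfl⟩ := exists_negPair_of_mem_partiteCNF hcover hC hunsat
  have huv : u ∉ B ∨ v ∉ B := by
    by_contra! h
    exact hnadj (hclique (Finset.mem_coe.2 h.1) (Finset.mem_coe.2 h.2) hne)
  rcases huv with hu | hv
  · exact ⟨(u, false), by simp [hu], rfl⟩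
  · exact ⟨(v, false), by simp [hv], rfl⟩

end partiteCNF

theorem stmt15_general [Fintype V] (k : ℕ) (part : V → Fin k)
    (H : SimpleGraph V) [DecidableRel H.Adj]
    (Cc : Set (CNF V)) (hCc : ∀ F' : CNF V, IsAntiMonotone2CNF F' → F' ∈ Cc)
    (f : Fin k → V) (hf1 : ∀ i, part (f i) = i)
    (hf2 : ∀ i j, i ≠ j → H.Adj (f i) (f j)) :
    (Finset.univ.image f).card = k ∧
    IsAntiMonotone2CNF
      (reduceF (partiteCNF k part H) (Finset.univ.image f) (fun _ => true)) ∧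
    reduceF (partiteCNF k part H) (Finset.univ.image f) (fun _ => true) ∈ Cc ∧
    Satisfiable
      (reduceF (partiteCNF k part H) (Finset.univ.image f) (fun _ => true)) := by
  have hinj : Function.Injective f := Function.LeftInverse.injective hf1
  have hcover : ∀ i, ∃ b ∈ Finset.univ.image f, part b = i :=
    fun i => ⟨f i, Finset.mem_image_of_mem f (Finset.mem_univ i), hf1 i⟩
  have hclique : H.IsClique ((Finset.univ.image f : Finset V) : Set V) := by
    rintro _ hu _ hv hne
    simp only [Finset.coe_image, Finset.coe_univ, Set.image_univ, Set.mem_range] at hu hv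
    obtain ⟨i, rfl⟩ := hu
    obtain ⟨j, rfl⟩ := hv
    exact hf2 i j (ne_of_apply_ne f hne)
  have hanti := isAntiMonotone2CNF_reduceF_partiteCNF (H := H) hcover
  refine ⟨?_, hanti, hCc _ hanti, (isZeroValid_reduceF_partiteCNF hcover hclique).satisfiable⟩
  rw [Finset.card_image_of_injective _ hinj, Finset.card_fin]

/-- If `H` contains a `k`-clique `{f 1, …, f k}` with `f i` in part `i`, then
`B = {f 1, …, f k}` is a weak `Cc`-backdoor set of size `k` of the associated formula,
for every class `Cc` containing all anti-monotone 2CNF formulas: setting all variables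
of `B` to true yields an anti-monotone 2CNF formula (hence a member of `Cc`) that is
satisfiable. -/
theorem stmt15 [Fintype V] (k : ℕ) (part : V → Fin k)
    (H : SimpleGraph V) [DecidableRel H.Adj]
    (hind : ∀ u v : V, H.Adj u v → part u ≠ part v)
    (Cc : Set (CNF V)) (hCc : ∀ F' : CNF V, IsAntiMonotone2CNF F' → F' ∈ Cc)
    (f : Fin k → V) (hf1 : ∀ i, part (f i) = i)
    (hf2 : ∀ i j, i ≠ j → H.Adj (f i) (f j)) :
    (Finset.univ.image f).card = k ∧
    IsAntiMonotone2CNF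
      (reduceF (partiteCNF k part H) (Finset.univ.image f) (fun _ => true)) ∧
    reduceF (partiteCNF k part H) (Finset.univ.image f) (fun _ => true) ∈ Cc ∧
    Satisfiable
      (reduceF (partiteCNF k part H) (Finset.univ.image f) (fun _ => true)) :=
  stmt15_general k part H Cc hCc f hf1 hf2
end
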